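/- Rational Monotonicity can fail in the weighted multi-preferential semantics: there exist a finite set of worlds W, weight functions, and extensions of formulas A, B, C such that Min_{<_A}([[A]]) ⊆ [[C]] and Min_{<_A}([[A]]) ∩ [[B]] ≠ ∅ (so T(A) → ¬B is not entailed), yet Min_{<_{A∧B}}([[A∧B]]) ⊄ [[C]], where W_{A∧B}(S) = min(W_A(S), W_B(S)) and [[A∧B]] = [[A]] ∩ [[B]]. -/
import Mathlib


/-- The set of `<`-minimal elements of `S`. -/
def MinSet {W : Type} (lt : W → W → Prop) (S : Set W) : Set W :=
  {w ∈ S | ¬ ∃ w' ∈ S, lt w' w}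

/-- Rational Monotonicity can fail in the weighted multi-preferential semantics:
there are weights and extensions with `T(A) → C` entailed, `T(A) → ¬B` not
entailed (some minimal `A`-world is a `B`-world), but `T(A∧B) → C` not entailed,
where `W_{A∧B}(S) = min(W_A(S), W_B(S))` and `[[A∧B]] = [[A]] ∩ [[B]]`. -/
theorem rational_monotonicity_fails :
    ∃ (W : Type) (_ : Finite W) (_ : Nonempty W)
      (wA wB : W → ℤ) (extA extB extC : Set W),
      MinSet (fun x y : W => wA x > wA y) extA ⊆ extC ∧
      (MinSet (fun x y : W => wA x > wA y) extA ∩ extB).Nonempty ∧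
      ¬ (MinSet (fun x y : W => min (wA x) (wB x) > min (wA y) (wB y)) (extA ∩ extB)
          ⊆ extC) := by
  refine ⟨Fin 2, inferInstance, inferInstance,
    ![1, 0], ![0, 5], Set.univ, Set.univ, {0}, ?_, ?_, ?_⟩
  · intro w hw
    rcases hw with ⟨-, hmin⟩
    fin_cases w
    · rfl
    · exact absurd ⟨0, Set.mem_univ _, by decide⟩ hmin
  · refine ⟨0, ⟨⟨Set.mem_univ _, ?_⟩, Set.mem_univ _⟩⟩
    rintro ⟨w', -, hw'⟩
    fin_cases w' <;> simp_all
  · intro h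
    have h1 : (1 : Fin 2) ∈ ({0} : Set (Fin 2)) := by
      apply h
      refine ⟨⟨Set.mem_univ _, Set.mem_univ _⟩, ?_⟩
      rintro ⟨w', -, hw'⟩
      fin_cases w' <;> simp_all
    simp at h1
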